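/- Let A, X be bounded operators on a reproducing kernel Hilbert space with X self-adjoint. Then ber(AX) ≤ ‖A‖ · ber(X²)^{1/2}. -/

import Mathlib

/-! By Cauchy–Schwarz, `|⟨A X k, k⟩| ≤ ‖A‖ ‖X k‖` for a unit vector `k`, and for self-adjoint `X`
one has `‖X k‖² = ⟨X² k, k⟩ ≤ ber(X²)`. -/

variable {E : Type*} [NormedAddCommGroup E] [InnerProductSpace ℂ E] [CompleteSpace E] {Ω : Type*}

/-- Berezin number of `A` w.r.t. the family of normalized reproducing kernels `k`. -/
noncomputable def ber (k : Ω → E) (A : E →L[ℂ] E) : ℝ :=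
  ⨆ p : Ω, ‖(inner ℂ (A (k p)) (k p) : ℂ)‖

noncomputable def adj (A : E →L[ℂ] E) : E →L[ℂ] E := ContinuousLinearMap.adjoint A

/-- Real part `(T + T*)/2`. -/
noncomputable def reOp (T : E →L[ℂ] E) : E →L[ℂ] E := (2 : ℂ)⁻¹ • (T + adj T)

/-- Imaginary part `(T - T*)/(2i)`. -/
noncomputable def imOp (T : E →L[ℂ] E) : E →L[ℂ] E := (2 * Complex.I)⁻¹ • (T - adj T)

/-- `|X| = (X*X)^{1/2}`. -/
noncomputable def absOp (X : E →L[ℂ] E) : E →L[ℂ] E := CFC.sqrt (adj X * X)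

theorem norm_inner_apply_le_opNorm {𝕜 F : Type*} [RCLike 𝕜] [NormedAddCommGroup F]
    [InnerProductSpace 𝕜 F] (T : F →L[𝕜] F) {x : F} (hx : ‖x‖ = 1) :
    ‖(inner 𝕜 (T x) x : 𝕜)‖ ≤ ‖T‖ :=
  calc ‖(inner 𝕜 (T x) x : 𝕜)‖ ≤ ‖T x‖ * ‖x‖ := norm_inner_le_norm _ _
    _ ≤ ‖T‖ := by simpa [hx] using T.le_opNorm x

theorem norm_inner_mul_apply_le {𝕜 F : Type*} [RCLike 𝕜] [NormedAddCommGroup F]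
    [InnerProductSpace 𝕜 F] (A X : F →L[𝕜] F) {x : F} (hx : ‖x‖ = 1) :
    ‖(inner 𝕜 ((A * X) x) x : 𝕜)‖ ≤ ‖A‖ * ‖X x‖ :=
  calc ‖(inner 𝕜 ((A * X) x) x : 𝕜)‖ ≤ ‖A (X x)‖ * ‖x‖ := norm_inner_le_norm _ _
    _ ≤ ‖A‖ * ‖X x‖ := by simpa [hx] using A.le_opNorm (X x)

section Berezin

variable {F : Type*} [NormedAddCommGroup F] [InnerProductSpace ℂ F] {k : Ω → F}

theorem ber_bddAbove (hk : ∀ p, ‖k p‖ = 1) (T : F →L[ℂ] F) :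
    BddAbove (Set.range fun p => ‖(inner ℂ (T (k p)) (k p) : ℂ)‖) :=
  ⟨‖T‖, Set.forall_mem_range.2 fun p => norm_inner_apply_le_opNorm T (hk p)⟩

theorem norm_inner_le_ber (hk : ∀ p, ‖k p‖ = 1) (T : F →L[ℂ] F) (p : Ω) :
    ‖(inner ℂ (T (k p)) (k p) : ℂ)‖ ≤ ber k T :=
  le_ciSup (ber_bddAbove hk T) p

theorem ber_le {T : F →L[ℂ] F} {c : ℝ} (hc : 0 ≤ c)
    (h : ∀ p, ‖(inner ℂ (T (k p)) (k p) : ℂ)‖ ≤ c) : ber k T ≤ c :=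
  Real.iSup_le h hc

theorem sq_norm_apply_le_ber_adj_mul_self [CompleteSpace F] (hk : ∀ p, ‖k p‖ = 1)
    (X : F →L[ℂ] F) (p : Ω) :
    ‖X (k p)‖ ^ 2 ≤ ber k (adj X * X) :=
  calc ‖X (k p)‖ ^ 2 = RCLike.re (inner ℂ ((adj X * X) (k p)) (k p) : ℂ) :=
        X.apply_norm_sq_eq_inner_adjoint_left _
    _ ≤ ‖(inner ℂ ((adj X * X) (k p)) (k p) : ℂ)‖ := RCLike.re_le_norm _
    _ ≤ ber k (adj X * X) := norm_inner_le_ber hk _ p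

end Berezin

theorem stmt5 (k : Ω → E) (hk : ∀ p, ‖k p‖ = 1) (A X : E →L[ℂ] E) (hX : adj X = X) :
    ber k (A * X) ≤ ‖A‖ * Real.sqrt (ber k (X * X)) := by
  refine ber_le (by positivity) fun p => (norm_inner_mul_apply_le A X (hk p)).trans ?_
  have hXk : ‖X (k p)‖ ^ 2 ≤ ber k (X * X) := by
    simpa only [hX] using sq_norm_apply_le_ber_adj_mul_self hk X p
  exact mul_le_mul_of_nonneg_left (Real.le_sqrt_of_sq_le hXk) (norm_nonneg A)
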